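/- arXiv:1504.01402 — 12 statements merged into one kernel-verified Lean document; each statement's English description precedes it below -/
import Mathlib

section
/- For any natural number n ≥ 1 and sets A, B, if there is an injection from Fin n × A to Fin n × B, then there is an injection from A to B. (This must be proved without the axiom of choice.) -/
theorem cancel_aux {n : ℕ} (hn : 1 ≤ n) {a b : Cardinal} (h : (n : Cardinal) * a ≤ n * b) :
    a ≤ b := by
  have ha : a ≤ (n : Cardinal) * a := by
    conv_lhs => rw [← one_mul a]
    exact mul_le_mul_left (by exact_mod_cast hn) a
  rcases le_or_gt Cardinal.aleph0 b with hb | hb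
  · have : (n : Cardinal) * b = b :=
      Cardinal.mul_eq_right hb ((Cardinal.nat_lt_aleph0 n).le.trans hb)
        (by exact_mod_cast Nat.one_le_iff_ne_zero.mp hn)
    calc a ≤ (n : Cardinal) * a := ha
    _ ≤ (n : Cardinal) * b := h
    _ = b := this
  · have hnb : (n : Cardinal) * b < Cardinal.aleph0 :=
      Cardinal.mul_lt_aleph0 (Cardinal.nat_lt_aleph0 n) hb
    have haa : a < Cardinal.aleph0 := lt_of_le_of_lt (ha.trans h) hnb
    obtain ⟨k, rfl⟩ := Cardinal.lt_aleph0.mp haa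
    obtain ⟨m, rfl⟩ := Cardinal.lt_aleph0.mp hb
    have : (n * k : ℕ) ≤ (n * m : ℕ) := by exact_mod_cast h
    exact_mod_cast Nat.le_of_mul_le_mul_left this (by omega)

theorem stmt_0 (n : ℕ) (hn : 1 ≤ n) (A B : Type*)
    (f : Fin n × A → Fin n × B) (hf : Function.Injective f) :
    ∃ g : A → B, Function.Injective g := by
  have h1 := Cardinal.lift_mk_le'.mpr ⟨⟨f, hf⟩⟩
  rw [Cardinal.mk_prod, Cardinal.mk_prod] at h1
  simp only [Cardinal.mk_fin, Cardinal.lift_mul, Cardinal.lift_natCast, Cardinal.lift_lift] at h1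
  have h2 := cancel_aux hn h1
  obtain ⟨g⟩ := Cardinal.lift_mk_le'.mp h2
  exact ⟨g, g.injective⟩
end

section
/- For any natural number n ≥ 1 and sets A, B, if there is a bijection between Fin n × A and Fin n × B, then there is a bijection between A and B. (Without the axiom of choice.) -/
open Cardinal

lemma nat_mul_cancel {n : ℕ} (hn : n ≠ 0) {a b : Cardinal} (h : (n : Cardinal) * a = n * b) :
    a = b := by
  have hn' : (n : Cardinal) ≠ 0 := Nat.cast_ne_zero.mpr hn
  rcases le_or_gt ℵ₀ a with ha | ha <;> rcases le_or_gt ℵ₀ b with hb | hb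
  · rwa [mul_eq_right ha ((nat_lt_aleph0 n).le.trans ha) hn',
      mul_eq_right hb ((nat_lt_aleph0 n).le.trans hb) hn'] at h
  · exfalso
    have : (n : Cardinal) * b < ℵ₀ := mul_lt_aleph0 (nat_lt_aleph0 n) hb
    rw [← h, mul_eq_right ha ((nat_lt_aleph0 n).le.trans ha) hn'] at this
    exact absurd ha (not_le.mpr this)
  · exfalso
    have : (n : Cardinal) * a < ℵ₀ := mul_lt_aleph0 (nat_lt_aleph0 n) ha
    rw [h, mul_eq_right hb ((nat_lt_aleph0 n).le.trans hb) hn'] at this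
    exact absurd hb (not_le.mpr this)
  · rcases lt_aleph0.mp ha with ⟨x, rfl⟩
    rcases lt_aleph0.mp hb with ⟨y, rfl⟩
    norm_cast at h ⊢
    exact Nat.eq_of_mul_eq_mul_left (Nat.pos_of_ne_zero hn) h

theorem stmt_1 (n : ℕ) (hn : 1 ≤ n) (A B : Type*)
    (e : Fin n × A ≃ Fin n × B) : Nonempty (A ≃ B) := by
  have h := Cardinal.lift_mk_eq'.mpr ⟨e⟩
  simp only [Cardinal.mk_prod, Cardinal.lift_mul, Cardinal.lift_lift, Cardinal.mk_fin,
    Cardinal.lift_natCast] at h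
  exact Cardinal.lift_mk_eq'.mp (nat_mul_cancel (by omega) h)
end

section
/- If there is an injection from A ⊕ C to B ⊕ C, then there exist a subset A₀ of A and an injection from the complement of A₀ in A to B, such that A₀ is swallowed by C (i.e., there is an injection from A₀ ⊕ C to C). -/
section Aux

variable {A B C : Type*}

/-- Iterate `f`, starting from `Sum.inl a`, absorbing at any `B` value. -/
def chainAux (f : A ⊕ C → B ⊕ C) : ℕ → A → B ⊕ C
  | 0, a => f (Sum.inl a)
  | n + 1, a => Sum.elim Sum.inl (fun c => f (Sum.inr c)) (chainAux f n a)

lemma chainAux_zero (f : A ⊕ C → B ⊕ C) (a : A) : chainAux f 0 a = f (Sum.inl a) := rfl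

lemma chainAux_succ (f : A ⊕ C → B ⊕ C) (n : ℕ) (a : A) :
    chainAux f (n + 1) a = Sum.elim Sum.inl (fun c => f (Sum.inr c)) (chainAux f n a) := rfl

/-- Backward uniqueness along chains. -/
lemma back_right {f : A ⊕ C → B ⊕ C} (hf : Function.Injective f) :
    ∀ n m (a a' : A) (c : C), chainAux f n a = Sum.inr c → chainAux f m a' = Sum.inr c →
      a = a' ∧ n = m := by
  intro n
  induction n with
  | zero =>
    intro m a a' c h1 h2
    rw [chainAux_zero] at h1
    cases m with
    | zero =>
      rw [chainAux_zero] at h2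
      have := hf (h1.trans h2.symm)
      exact ⟨by simpa using this, rfl⟩
    | succ k =>
      exfalso
      rw [chainAux_succ] at h2
      cases hk : chainAux f k a' with
      | inl b => rw [hk] at h2; simp at h2
      | inr c' =>
        rw [hk] at h2
        simp only [Sum.elim_inr] at h2
        have := hf (h1.trans h2.symm)
        simp at this
  | succ k ih =>
    intro m a a' c h1 h2
    rw [chainAux_succ] at h1
    cases hk : chainAux f k a with
    | inl b => rw [hk] at h1; simp at h1
    | inr c1 =>
      rw [hk] at h1
      simp only [Sum.elim_inr] at h1
      cases m with
      | zero =>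
        exfalso
        rw [chainAux_zero] at h2
        have := hf (h1.trans h2.symm)
        simp at this
      | succ j =>
        rw [chainAux_succ] at h2
        cases hj : chainAux f j a' with
        | inl b => rw [hj] at h2; simp at h2
        | inr c2 =>
          rw [hj] at h2
          simp only [Sum.elim_inr] at h2
          have hcc : c1 = c2 := by
            have := hf (h1.trans h2.symm)
            simpa using this
          obtain ⟨ha, hn⟩ := ih j a a' c1 hk (hcc ▸ hj)
          exact ⟨ha, by omega⟩

/-- The set of `a : A` whose chain stays in `C` forever. -/
def swA0 (f : A ⊕ C → B ⊕ C) : Set A := {a | ∀ n, (chainAux f n a).isRight}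

lemma mem_swA0 {f : A ⊕ C → B ⊕ C} {a : A} : a ∈ swA0 f ↔ ∀ n, (chainAux f n a).isRight :=
  Iff.rfl

lemma exists_isLeft {f : A ⊕ C → B ⊕ C} (a : A) (ha : a ∉ swA0 f) :
    ∃ n, (chainAux f n a).isLeft := by
  simp only [swA0, Set.mem_setOf_eq, not_forall] at ha
  obtain ⟨n, hn⟩ := ha
  exact ⟨n, by simpa [Sum.not_isRight] using hn⟩

open Classical in
noncomputable def gfun (f : A ⊕ C → B ⊕ C) : (↥(swA0 f)ᶜ) → B := fun a =>
  (chainAux f (Nat.find (exists_isLeft a.1 a.2)) a.1).getLeft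
    (Nat.find_spec (exists_isLeft a.1 a.2))

lemma gfun_spec {f : A ⊕ C → B ⊕ C} (a : ↥(swA0 f)ᶜ) :
    chainAux f (Nat.find (exists_isLeft a.1 a.2)) a.1 = Sum.inl (gfun f a) := by
  rw [Sum.eq_left_iff_getLeft_eq]
  exact ⟨Nat.find_spec (exists_isLeft a.1 a.2), rfl⟩

lemma gfun_inj {f : A ⊕ C → B ⊕ C} (hf : Function.Injective f) :
    Function.Injective (gfun f) := by
  intro a a' hgg
  have h1 := gfun_spec a
  have h2 := gfun_spec a'
  rw [hgg] at h1
  set k := Nat.find (exists_isLeft a.1 a.2) with hk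
  set k' := Nat.find (exists_isLeft a'.1 a'.2) with hk'
  -- extract the "arrival" step
  have key : ∀ (x : A) (hx : x ∉ swA0 f) (b : B),
      chainAux f (Nat.find (exists_isLeft x hx)) x = Sum.inl b →
      f (Sum.inl x) = Sum.inl b ∨
        ∃ j c, chainAux f j x = Sum.inr c ∧ f (Sum.inr c) = Sum.inl b := by
    intro x hx b hb
    cases hm : Nat.find (exists_isLeft x hx) with
    | zero =>
      left; rw [hm, chainAux_zero] at hb; exact hb
    | succ j =>
      right
      have hlt : ¬(chainAux f j x).isLeft := Nat.find_min _ (by omega : j < Nat.find _)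
      cases hc : chainAux f j x with
      | inl b' => rw [hc] at hlt; simp at hlt
      | inr c =>
        refine ⟨j, c, hc, ?_⟩
        rw [hm, chainAux_succ, hc] at hb
        simpa using hb
  have k1 := key a.1 a.2 _ h1
  have k2 := key a'.1 a'.2 _ h2
  rcases k1 with e1 | ⟨j, c, hc, e1⟩ <;> rcases k2 with e2 | ⟨j', c', hc', e2⟩
  · have := hf (e1.trans e2.symm)
    exact Subtype.ext (by simpa using this)
  · have := hf (e1.trans e2.symm); simp at this
  · have := hf (e1.trans e2.symm); simp at this
  · have hcc : c = c' := by
      have := hf (e1.trans e2.symm); simpa using this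
    obtain ⟨ha, _⟩ := back_right hf j j' a.1 a'.1 c hc (hcc ▸ hc')
    exact Subtype.ext ha

/-- Set of elements of `C` reachable from some `a ∈ swA0 f`. -/
def swS (f : A ⊕ C → B ⊕ C) : Set C :=
  {c | ∃ a ∈ swA0 f, ∃ n, chainAux f n a = Sum.inr c}

lemma isRight_f_inr {f : A ⊕ C → B ⊕ C} {c : C} (hc : c ∈ swS f) :
    (f (Sum.inr c)).isRight := by
  obtain ⟨a, ha, n, hn⟩ := hc
  have h := ha (n + 1)
  rw [chainAux_succ, hn] at h
  simpa using h

open Classical in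
noncomputable def hfun (f : A ⊕ C → B ⊕ C) : (↥(swA0 f) ⊕ C) → C := fun x =>
  match x with
  | Sum.inl a => (f (Sum.inl a.1)).getRight (by simpa [chainAux_zero] using a.2 0)
  | Sum.inr c =>
      if hc : c ∈ swS f then (f (Sum.inr c)).getRight (isRight_f_inr hc) else c

lemma hfun_inl_spec {f : A ⊕ C → B ⊕ C} (a : ↥(swA0 f)) :
    f (Sum.inl a.1) = Sum.inr (hfun f (Sum.inl a)) := by
  rw [Sum.eq_right_iff_getRight_eq]
  exact ⟨_, rfl⟩

lemma hfun_inr_spec {f : A ⊕ C → B ⊕ C} {c : C} (hc : c ∈ swS f) :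
    f (Sum.inr c) = Sum.inr (hfun f (Sum.inr c)) := by
  rw [Sum.eq_right_iff_getRight_eq]
  refine ⟨isRight_f_inr hc, ?_⟩
  simp [hfun, hc]

lemma hfun_inl_mem {f : A ⊕ C → B ⊕ C} (a : ↥(swA0 f)) :
    hfun f (Sum.inl a) ∈ swS f := by
  refine ⟨a.1, a.2, 0, ?_⟩
  rw [chainAux_zero]
  exact hfun_inl_spec a

lemma hfun_inr_mem {f : A ⊕ C → B ⊕ C} {c : C} (hc : c ∈ swS f) :
    hfun f (Sum.inr c) ∈ swS f := by
  obtain ⟨a, ha, n, hn⟩ := hc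
  refine ⟨a, ha, n + 1, ?_⟩
  rw [chainAux_succ, hn]
  simpa using hfun_inr_spec ⟨a, ha, n, hn⟩

lemma hfun_inj {f : A ⊕ C → B ⊕ C} (hf : Function.Injective f) :
    Function.Injective (hfun f) := by
  intro x y hxy
  match x, y with
  | Sum.inl a, Sum.inl a' =>
    have e1 := hfun_inl_spec a
    have e2 := hfun_inl_spec a'
    rw [hxy] at e1
    have := hf (e1.trans e2.symm)
    simp only [Sum.inl.injEq] at this
    exact congrArg Sum.inl (Subtype.ext this)
  | Sum.inl a, Sum.inr c =>
    exfalso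
    by_cases hc : c ∈ swS f
    · have e1 := hfun_inl_spec a
      have e2 := hfun_inr_spec hc
      rw [hxy] at e1
      have := hf (e1.trans e2.symm)
      simp at this
    · have : hfun f (Sum.inr c) = c := by simp [hfun, hc]
      have hm := hfun_inl_mem a
      rw [hxy, this] at hm
      exact hc hm
  | Sum.inr c, Sum.inl a =>
    exfalso
    by_cases hc : c ∈ swS f
    · have e1 := hfun_inl_spec a
      have e2 := hfun_inr_spec hc
      rw [← hxy] at e1
      have := hf (e1.trans e2.symm)
      simp at this
    · have : hfun f (Sum.inr c) = c := by simp [hfun, hc]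
      have hm := hfun_inl_mem a
      rw [← hxy, this] at hm
      exact hc hm
  | Sum.inr c, Sum.inr c' =>
    by_cases hc : c ∈ swS f <;> by_cases hc' : c' ∈ swS f
    · have e1 := hfun_inr_spec hc
      have e2 := hfun_inr_spec hc'
      rw [hxy] at e1
      have := hf (e1.trans e2.symm)
      simpa using this
    · exfalso
      have h2 : hfun f (Sum.inr c') = c' := by simp [hfun, hc']
      have hm := hfun_inr_mem hc
      rw [hxy, h2] at hm
      exact hc' hm
    · exfalso
      have h2 : hfun f (Sum.inr c) = c := by simp [hfun, hc]
      have hm := hfun_inr_mem hc'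
      rw [← hxy, h2] at hm
      exact hc hm
    · have h1 : hfun f (Sum.inr c) = c := by simp [hfun, hc]
      have h2 : hfun f (Sum.inr c') = c' := by simp [hfun, hc']
      rw [h1, h2] at hxy
      exact congrArg Sum.inr hxy

end Aux

theorem stmt_2 (A B C : Type*)
    (f : A ⊕ C → B ⊕ C) (hf : Function.Injective f) :
    ∃ (A₀ : Set A) (g : (↥A₀ᶜ) → B) (h : (↥A₀ ⊕ C) → C),
      Function.Injective g ∧ Function.Injective h :=
  ⟨swA0 f, gfun f, hfun f, gfun_inj hf, hfun_inj hf⟩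
end

section
/- X is swallowed by Y (there is an injection from X ⊕ Y to Y) if and only if there is a bijection between X ⊕ Y and Y. -/
theorem stmt_4 (X Y : Type*) :
    (∃ f : X ⊕ Y → Y, Function.Injective f) ↔ Nonempty (X ⊕ Y ≃ Y) := by
  constructor
  · rintro ⟨f, hf⟩
    exact ((Function.Embedding.antisymm ⟨f, hf⟩ ⟨Sum.inr, Sum.inr_injective⟩))
  · rintro ⟨e⟩
    exact ⟨e, e.injective⟩
end

section
/- X is swallowed by Y if and only if there exists a family of pairwise-disjoint injective sequences (functions ℕ → Y with disjoint ranges), one for each element of X. -/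
theorem stmt_5 (X Y : Type*) :
    (∃ f : X ⊕ Y → Y, Function.Injective f) ↔
    (∃ s : X → ℕ → Y, (∀ x, Function.Injective (s x)) ∧
      ∀ x x', x ≠ x' → Disjoint (Set.range (s x)) (Set.range (s x'))) := by
  constructor
  · rintro ⟨f, hf⟩
    set g : Y → Y := fun y => f (Sum.inr y) with hg
    set a : X → Y := fun x => f (Sum.inl x) with ha
    have hginj : Function.Injective g := fun y y' h => by
      have := hf h; simpa using this
    have hag : ∀ x y, a x ≠ g y := fun x y h => by
      have := hf h; simp at this
    have key : ∀ m n (x x' : X), g^[m] (a x) = g^[n] (a x') → m = n ∧ x = x' := by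
      intro m
      induction m with
      | zero =>
        intro n x x' h
        cases n with
        | zero =>
          simp only [Function.iterate_zero, id] at h
          have := hf h
          simp at this
          exact ⟨rfl, this⟩
        | succ k =>
          rw [Function.iterate_succ_apply'] at h
          exact absurd h (hag x _)
      | succ m ih =>
        intro n x x' h
        cases n with
        | zero =>
          rw [Function.iterate_succ_apply'] at h
          exact absurd h.symm (hag x' _)
        | succ k =>
          rw [Function.iterate_succ_apply', Function.iterate_succ_apply'] at h
          obtain ⟨h1, h2⟩ := ih k x x' (hginj h)
          exact ⟨by omega, h2⟩
    refine ⟨fun x n => g^[n] (a x), fun x m n h => (key m n x x h).1, ?_⟩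
    intro x x' hne
    rw [Set.disjoint_left]
    rintro y ⟨m, rfl⟩ ⟨n, hn⟩
    exact hne ((key n m x' x hn).2).symm
  · rintro ⟨s, hinj, hdisj⟩
    have uniq : ∀ (x x' : X) m n, s x m = s x' n → x = x' ∧ m = n := by
      intro x x' m n h
      have hx : x = x' := by
        by_contra hne
        exact Set.disjoint_left.mp (hdisj x x' hne) ⟨m, rfl⟩ ⟨n, h.symm⟩
      subst hx
      exact ⟨rfl, hinj x h⟩
    classical
    set P : Y → Prop := fun y => ∃ p : X × ℕ, s p.1 p.2 = y with hP
    refine ⟨fun z => match z with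
      | Sum.inl x => s x 0
      | Sum.inr y => if h : P y then s h.choose.1 (h.choose.2 + 1) else y, ?_⟩
    rintro (x | y) (x' | y') h
    · simp only at h
      exact congrArg Sum.inl (uniq x x' 0 0 h).1
    · simp only at h
      split_ifs at h with h'
      · exact absurd (uniq _ _ _ _ h).2 (by omega)
      · exact absurd ⟨(x, 0), h⟩ h'
    · simp only at h
      split_ifs at h with h'
      · exact absurd (uniq _ _ _ _ h).2 (by omega)
      · exact absurd ⟨(x', 0), h.symm⟩ h'
    · simp only at h
      split_ifs at h with h1 h2 h2
      · obtain ⟨he, hn⟩ := uniq _ _ _ _ h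
        have hn' : h1.choose.2 = h2.choose.2 := by omega
        have e1 : s h1.choose.1 h1.choose.2 = y := h1.choose_spec
        have e2 : s h2.choose.1 h2.choose.2 = y' := h2.choose_spec
        rw [← e1, ← e2, he, hn']
      · exact absurd ⟨(h1.choose.1, h1.choose.2 + 1), h⟩ h2
      · exact absurd ⟨(h2.choose.1, h2.choose.2 + 1), h.symm⟩ h1
      · exact congrArg Sum.inr h
end

section
/- If there is an injection from A ⊕ C to B ⊕ C ⊕ C, then there is an injection from A to B ⊕ C. -/
universe u v w

theorem stmt_7_aux {A : Type u} {B : Type v} {C : Type w}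
    (f : A ⊕ C → B ⊕ C ⊕ C) (hf : Function.Injective f) :
    ∃ g : A → B ⊕ C, Function.Injective g := by
  have key : ∀ a b c : Cardinal.{max u v w}, a + c ≤ b + (c + c) → a ≤ b + c := by
    intro a b c h
    rcases lt_or_ge c Cardinal.aleph0 with hc | hc
    · rw [← add_assoc] at h
      exact (Cardinal.add_le_add_iff_of_lt_aleph0 hc).mp h
    · calc a ≤ a + c := self_le_add_right _ _
        _ ≤ b + (c + c) := h
        _ = b + c := by rw [Cardinal.add_eq_self hc]
  have h1 := Cardinal.lift_mk_le'.mpr ⟨⟨f, hf⟩⟩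
  simp only [Cardinal.mk_sum, Cardinal.lift_add, Cardinal.lift_lift] at h1
  have h2 := key _ _ _ h1
  have h3 : Cardinal.lift.{max v w} (Cardinal.mk A) ≤ Cardinal.lift.{u} (Cardinal.mk (B ⊕ C)) := by
    simp only [Cardinal.mk_sum, Cardinal.lift_add, Cardinal.lift_lift]
    convert h2 using 2
    rw [show Cardinal.lift.{max u v w, w} = Cardinal.lift.{max u v, w} from Cardinal.lift_umax]
  obtain ⟨⟨g, hg⟩⟩ := Cardinal.lift_mk_le'.mp h3
  exact ⟨g, hg⟩

theorem stmt_7 (A B C : Type*)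
    (f : A ⊕ C → B ⊕ C ⊕ C) (hf : Function.Injective f) :
    ∃ g : A → B ⊕ C, Function.Injective g := by
  exact stmt_7_aux f hf
end

section
/- For finite m < n, if there is an injection from A ⊕ (Fin m × C) to B ⊕ (Fin n × C), then there is an injection from A to B ⊕ (Fin (n−m) × C). -/
/-!
Pass to cardinals: an injection gives `#A + m * #C ≤ #B + n * #C`. If `C` is finite, the term
`m * #C` is finite and can be cancelled. If `C` is infinite, then
`n * #C = #C = (n - m) * #C` because `0 < n - m ≤ n`, so the term `m * #C` may simply be dropped.
-/

namespace Cardinal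

theorem le_add_mul_of_add_mul_le_add_mul {a b c : Cardinal} {m k : ℕ} (hk : k ≠ 0)
    (h : a + m * c ≤ b + (m + k : ℕ) * c) : a ≤ b + k * c := by
  rcases lt_or_ge c ℵ₀ with hc | hc
  · have hmc : (m : Cardinal) * c < ℵ₀ := mul_lt_aleph0 natCast_lt_aleph0 hc
    rw [← add_le_add_iff_of_lt_aleph0 hmc]
    calc a + m * c ≤ b + (m + k : ℕ) * c := h
      _ = b + k * c + m * c := by push_cast; ring
  · have mul_eq_self {j : ℕ} (hj : j ≠ 0) : (j : Cardinal) * c = c :=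
      mul_eq_right hc (natCast_lt_aleph0.le.trans hc) (by exact_mod_cast hj)
    calc a ≤ a + m * c := le_self_add
      _ ≤ b + (m + k : ℕ) * c := h
      _ = b + k * c := by rw [mul_eq_self (by omega), mul_eq_self hk]

end Cardinal

theorem stmt_8 (m n : ℕ) (hmn : m < n) (A B C : Type*)
    (f : A ⊕ (Fin m × C) → B ⊕ (Fin n × C)) (hf : Function.Injective f) :
    ∃ g : A → B ⊕ (Fin (n - m) × C), Function.Injective g := by
  obtain ⟨k, rfl⟩ := Nat.exists_eq_add_of_le hmn.le
  have hk : k ≠ 0 := by omega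
  have hcard := Cardinal.lift_mk_le'.mpr ⟨⟨f, hf⟩⟩
  suffices Nonempty (A ↪ B ⊕ (Fin (m + k - m) × C)) from
    this.elim fun g ↦ ⟨g, g.injective⟩
  rw [← Cardinal.lift_mk_le', Nat.add_sub_cancel_left]
  simp only [Cardinal.mk_sum, Cardinal.lift_add, Cardinal.lift_lift, Cardinal.mk_prod,
    Cardinal.lift_mul, Cardinal.mk_fintype, Fintype.card_fin, Cardinal.lift_natCast] at hcard ⊢
  -- `u_3` is the universe of `C`: `simp` leaves `#C` lifted along two different universe expressions.
  rw [Cardinal.lift_umax.{u_3, max u_1 u_2}] at hcard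
  exact Cardinal.le_add_mul_of_add_mul_le_add_mul hk hcard
end

section
/- For n ≥ 1, if there is an injection from A ⊕ (Fin n × C) to B ⊕ (Fin n × C), then there is an injection from A ⊕ C to B ⊕ C. -/
open Cardinal

/-- If `n * c` is finite it cancels outright; otherwise `n * c = c` for `n ≠ 0`. -/
theorem Cardinal.add_le_add_of_add_natCast_mul_le {a b c : Cardinal} (n : ℕ)
    (h : a + n * c ≤ b + n * c) : a + c ≤ b + c := by
  rcases eq_or_ne n 0 with rfl | hn
  · simpa using add_le_add_left h c
  rcases lt_or_ge c ℵ₀ with hc | hc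
  · have hnc : (n : Cardinal) * c < ℵ₀ := mul_lt_aleph0 (natCast_lt_aleph0 (n := n)) hc
    exact add_le_add_left ((add_le_add_iff_of_lt_aleph0 hnc).mp h) c
  · rwa [mul_eq_right hc ((natCast_lt_aleph0 (n := n)).le.trans hc)
      (Nat.cast_ne_zero.mpr hn)] at h

theorem stmt_9_general (n : ℕ) (A B C : Type*)
    (f : A ⊕ (Fin n × C) → B ⊕ (Fin n × C)) (hf : Function.Injective f) :
    ∃ g : A ⊕ C → B ⊕ C, Function.Injective g := by
  have hcard := lift_mk_le'.mpr ⟨(⟨f, hf⟩ : A ⊕ (Fin n × C) ↪ B ⊕ (Fin n × C))⟩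
  simp only [mk_sum, mk_prod, mk_fin, lift_add, lift_mul, lift_lift, lift_natCast] at hcard
  obtain ⟨g⟩ : Nonempty (A ⊕ C ↪ B ⊕ C) := by
    rw [← lift_mk_le']
    simpa only [mk_sum, lift_add, lift_lift] using add_le_add_of_add_natCast_mul_le n hcard
  exact ⟨g, g.injective⟩

theorem stmt_9 (n : ℕ) (hn : 1 ≤ n) (A B C : Type*)
    (f : A ⊕ (Fin n × C) → B ⊕ (Fin n × C)) (hf : Function.Injective f) :
    ∃ g : A ⊕ C → B ⊕ C, Function.Injective g :=
  stmt_9_general n A B C f hf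
end

section
/- For n ≥ 1, if there is a bijection between A ⊕ (Fin n × C) and B ⊕ (Fin n × C), then there is a bijection between A ⊕ C and B ⊕ C. -/
open Cardinal

lemma aux_cancel (n : ℕ) (hn : 1 ≤ n) (a b c : Cardinal)
    (h : a + n * c = b + n * c) : a + c = b + c := by
  rcases lt_or_ge c Cardinal.aleph0 with hC | hC
  · obtain ⟨k, hk⟩ := Cardinal.lt_aleph0.mp hC
    rw [hk, ← Nat.cast_mul, Cardinal.add_nat_inj] at h
    rw [hk, h]
  · have hmul : (n : Cardinal) * c = c := by
      apply Cardinal.mul_eq_right hC ((Cardinal.nat_lt_aleph0 n).le.trans hC)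
      exact_mod_cast Nat.one_le_iff_ne_zero.mp hn
    rwa [hmul] at h

theorem stmt_10 (n : ℕ) (hn : 1 ≤ n) (A B C : Type*)
    (e : A ⊕ (Fin n × C) ≃ B ⊕ (Fin n × C)) :
    Nonempty ((A ⊕ C) ≃ (B ⊕ C)) := by
  have key : Cardinal.lift.{max u_2 u_3} #(A ⊕ Fin n × C)
      = Cardinal.lift.{max u_1 u_3} #(B ⊕ Fin n × C) := Cardinal.lift_mk_eq'.mpr ⟨e⟩
  rw [← Cardinal.lift_mk_eq']
  simp only [mk_sum, mk_prod, mk_fin, Cardinal.lift_add, Cardinal.lift_mul,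
    Cardinal.lift_natCast, Cardinal.lift_lift] at key ⊢
  exact aux_cancel n hn _ _ _ key
end

section
/- For n ≥ 1, if A is swallowed by Fin n × C, then A is swallowed by C. -/
/-! Compare cardinalities: `#A + n * #C ≤ n * #C`. If `C` is finite, this is an inequality of
natural numbers and forces `A` to be empty; if `C` is infinite, then `#A ≤ n * #C ≤ #C`, so
`#A + #C = #C`. -/

open Cardinal

namespace Cardinal

theorem add_le_of_add_natCast_mul_le {a c : Cardinal} {n : ℕ} (h : a + n * c ≤ n * c) :
    a + c ≤ c := by
  rcases lt_or_ge c ℵ₀ with hc | hc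
  · have ha : a < ℵ₀ := (le_self_add.trans h).trans_lt (mul_lt_aleph0 natCast_lt_aleph0 hc)
    obtain ⟨k, rfl⟩ := lt_aleph0.mp ha
    obtain ⟨m, rfl⟩ := lt_aleph0.mp hc
    norm_cast at h ⊢
    omega
  · have hnc : (n : Cardinal) * c ≤ c := mul_le_of_le hc (natCast_lt_aleph0.le.trans hc) le_rfl
    exact add_le_of_le hc ((le_self_add.trans h).trans hnc) le_rfl

end Cardinal

theorem stmt_11_general (n : ℕ) (A C : Type*)
    (f : A ⊕ (Fin n × C) → Fin n × C) (hf : Function.Injective f) :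
    ∃ g : A ⊕ C → C, Function.Injective g := by
  have hcard := lift_mk_le_lift_mk_of_injective hf
  simp only [mk_sum, mk_prod, mk_fin, lift_add, lift_mul, lift_lift, lift_natCast] at hcard
  obtain ⟨g⟩ := (lift_mk_le' (α := A ⊕ C) (β := C)).mp <| by
    simpa only [mk_sum, lift_add, lift_lift, lift_umax] using add_le_of_add_natCast_mul_le hcard
  exact ⟨g, g.injective⟩

theorem stmt_11 (n : ℕ) (hn : 1 ≤ n) (A C : Type*)
    (f : A ⊕ (Fin n × C) → Fin n × C) (hf : Function.Injective f) :
    ∃ g : A ⊕ C → C, Function.Injective g :=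
  stmt_11_general n A C f hf
end

section
/- For n ≥ 1, if there is an injection from Fin n × A to Fin n × B and an injection from B to A, then there is a bijection between A and B. -/
universe u v

open Cardinal in
theorem Function.Embedding.nonempty_of_fin_prod {α : Type u} {β : Type v} {n : ℕ} (hn : n ≠ 0)
    (f : Fin n × α ↪ Fin n × β) : Nonempty (α ↪ β) := by
  have h := lift_mk_le'.mpr ⟨f⟩
  simp only [mk_prod, lift_mul, mk_fin, lift_natCast, lift_lift,
    natCast_mul_le_natCast_mul hn] at h
  exact lift_mk_le'.mp h

theorem stmt_13 (n : ℕ) (hn : 1 ≤ n) (A B : Type*)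
    (f : Fin n × A → Fin n × B) (hf : Function.Injective f)
    (g : B → A) (hg : Function.Injective g) :
    Nonempty (A ≃ B) := by
  obtain ⟨e⟩ := Function.Embedding.nonempty_of_fin_prod (Nat.one_le_iff_ne_zero.mp hn) ⟨f, hf⟩
  exact e.antisymm ⟨g, hg⟩
end

section
/- If A is swallowed by B (there is an injection from A ⊕ B to B) and there is an injection from B to C, then A is swallowed by C. -/
theorem stmt_19 (A B C : Type*)
    (f : A ⊕ B → B) (hf : Function.Injective f)
    (g : B → C) (hg : Function.Injective g) :
    ∃ h : A ⊕ C → C, Function.Injective h := by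
  classical
  refine ⟨fun x => Sum.elim (fun a => g (f (Sum.inl a)))
    (fun c => if h : ∃ b, g b = c then g (f (Sum.inr h.choose)) else c) x, ?_⟩
  have key : Function.Injective (fun x : A ⊕ B => g (f x)) := fun x y h => hf (hg h)
  rintro (a | c) (a' | c') hxy
  · simpa using congrArg Sum.getLeft? (key (hxy : _))
  · simp only [Sum.elim_inl, Sum.elim_inr] at hxy
    split_ifs at hxy with h
    · exact absurd (key hxy) (by simp)
    · exact absurd ⟨_, hxy⟩ h
  · simp only [Sum.elim_inl, Sum.elim_inr] at hxy
    split_ifs at hxy with h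
    · exact absurd (key hxy) (by simp)
    · exact absurd ⟨_, hxy.symm⟩ h
  · simp only [Sum.elim_inr] at hxy
    split_ifs at hxy with h h'
    · have := key hxy
      simp only [Sum.inr.injEq] at this
      rw [← h.choose_spec, ← h'.choose_spec, this]
    · exact absurd ⟨_, hxy⟩ h'
    · exact absurd ⟨_, hxy.symm⟩ h
    · exact congrArg Sum.inr hxy
end
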